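/- Let d > k ≥ 0 and j ≥ 0 be integers, let m ≥ 2, and suppose (a_i)_{i≥2} are positive reals. Define for ρ > 0 the partition sum M_m(ρ) := Σ_{π} ∏_{B∈π} a_{|B|} ρ^{j|B| + d - k}, summing over set partitions of {1,…,m} with all blocks of size ≥ 2. Then for m even, lim_{ρ→∞} M_m(ρ)/ρ^{jm + m(d-k)/2} = (m-1)!! · a_2^{m/2}, and for m odd, lim_{ρ→∞} M_m(ρ)/ρ^{jm + ⌊m(d-k)/2⌋ } exists and equals C(m,3)(m-4)!! a_3 a_2^{(m-3)/2} when d - k is such that the floor term matches jm + (d-k)(m-1)/2 (in particular when d-k = 1 for the odd case). -/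

import Mathlib

open scoped Classical Nat
open Filter

def IsPartitionGe2 {m : ℕ} (P : Finset (Finset (Fin m))) : Prop :=
  (∀ B ∈ P, 2 ≤ B.card) ∧ ∀ x : Fin m, ∃! B, B ∈ P ∧ x ∈ B

/-- The weighted partition sum
`M_m(ρ) = Σ_π Π_{B∈π} a_{|B|} ρ^{j|B| + dk}` over set partitions of `{1,…,m}`
with all blocks of size at least `2`. -/
noncomputable def partSum (a : ℕ → ℝ) (j dk m : ℕ) (ρ : ℝ) : ℝ :=
  ∑ P ∈ Finset.univ.filter (fun P : Finset (Finset (Fin m)) => IsPartitionGe2 P),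
    ∏ B ∈ P, a B.card * ρ ^ (j * B.card + dk)

/-!
The partition `π` contributes `(∏_{B ∈ π} a_{|B|}) ρ^(jm + (d-k)|π|)`, so the ratio tends to the
total weight of the partitions with the largest number of blocks. Blocks have size at least two,
so `|π| ≤ ⌊m/2⌋`, with equality exactly for perfect matchings when `m` is even and for one triple
plus a perfect matching of the rest when `m` is odd. Pairing off a fixed point with each of the
other `2n - 1` points counts `(2n-1)!!` perfect matchings; choosing the triple first gives
`C(m,3) (m-4)!!` in the odd case.
-/

open Finset Topology

theorem tendsto_mul_pow_div_pow (c : ℝ) {e E : ℕ} (h : e ≤ E) :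
    Tendsto (fun ρ : ℝ => c * ρ ^ e / ρ ^ E) atTop (𝓝 (if e = E then c else 0)) := by
  have hlim : Tendsto (fun ρ : ℝ => c / ρ ^ (E - e)) atTop (𝓝 (if e = E then c else 0)) := by
    split_ifs with hE
    · simp [hE]
    · exact tendsto_const_nhds.div_atTop (tendsto_pow_atTop (by omega))
  refine hlim.congr' ?_
  filter_upwards [eventually_gt_atTop 0] with ρ hρ
  rw [pow_sub₀ ρ hρ.ne' h, ← div_eq_mul_inv, div_div_eq_mul_div]

theorem tendsto_sum_mul_pow_div_pow {ι : Type*} (S : Finset ι) (c : ι → ℝ) (e : ι → ℕ) {E : ℕ}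
    (he : ∀ i ∈ S, e i ≤ E) :
    Tendsto (fun ρ : ℝ => (∑ i ∈ S, c i * ρ ^ e i) / ρ ^ E) atTop
      (𝓝 (∑ i ∈ S with e i = E, c i)) := by
  rw [sum_filter]
  simpa only [sum_div] using
    tendsto_finsetSum S fun i hi => tendsto_mul_pow_div_pow (c i) (he i hi)

section SetPartition

variable {α : Type*}

def IsSetPartition (s : Finset α) (P : Finset (Finset α)) : Prop :=
  (∀ B ∈ P, B ⊆ s) ∧ ∀ x ∈ s, ∃! B, B ∈ P ∧ x ∈ B

namespace IsSetPartition

variable {s C : Finset α} {P Q : Finset (Finset α)}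

theorem subset_powerset (hP : IsSetPartition s P) : P ⊆ s.powerset :=
  fun B hB => mem_powerset.2 (hP.1 B hB)

theorem eq_of_mem_of_mem (hP : IsSetPartition s P) {B B' : Finset α} (hB : B ∈ P) (hB' : B' ∈ P)
    {x : α} (hx : x ∈ B) (hx' : x ∈ B') : B = B' := by
  obtain ⟨_, -, huniq⟩ := hP.2 x (hP.1 B hB hx)
  exact (huniq B ⟨hB, hx⟩).trans (huniq B' ⟨hB', hx'⟩).symm

variable [DecidableEq α]

theorem sum_card (hP : IsSetPartition s P) : ∑ B ∈ P, B.card = s.card := by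
  have hdisj : (P : Set (Finset α)).PairwiseDisjoint id := fun B hB B' hB' hne =>
    disjoint_left.2 fun x hx hx' => hne (hP.eq_of_mem_of_mem hB hB' hx hx')
  have hunion : P.biUnion id = s := by
    ext x
    simp only [mem_biUnion, id]
    refine ⟨fun ⟨B, hB, hx⟩ => hP.1 B hB hx, fun hx => ?_⟩
    obtain ⟨B, ⟨hB, hxB⟩, -⟩ := hP.2 x hx
    exact ⟨B, hB, hxB⟩
  rw [← hunion, card_biUnion hdisj]
  rfl

theorem card_eq_card_add_two_mul (hP : IsSetPartition s P) (hC : C ∈ P)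
    (h2 : ∀ B ∈ P.erase C, B.card = 2) : s.card = C.card + 2 * (P.erase C).card := by
  rw [← hP.sum_card, ← add_sum_erase P _ hC, sum_const_nat h2, mul_comm]

theorem insert_iff (hCQ : C ∉ Q) :
    IsSetPartition s (insert C Q) ↔ C ⊆ s ∧ IsSetPartition (s \ C) Q := by
  constructor
  · intro hP
    refine ⟨hP.1 C (mem_insert_self C Q), fun B hB x hxB => ?_, fun x hx => ?_⟩
    · have hxs := hP.1 B (mem_insert_of_mem hB) hxB
      refine mem_sdiff.2 ⟨hxs, fun hxC => hCQ ?_⟩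
      rwa [hP.eq_of_mem_of_mem (mem_insert_self C Q) (mem_insert_of_mem hB) hxC hxB]
    · obtain ⟨hxs, hxC⟩ := mem_sdiff.1 hx
      obtain ⟨B, ⟨hB, hxB⟩, huniq⟩ := hP.2 x hxs
      have hBQ : B ∈ Q := (mem_insert.1 hB).resolve_left fun h => hxC (h ▸ hxB)
      exact ⟨B, ⟨hBQ, hxB⟩, fun B' hB' => huniq B' ⟨mem_insert_of_mem hB'.1, hB'.2⟩⟩
  · rintro ⟨hCs, hQ⟩
    refine ⟨fun B hB => ?_, fun x hx => ?_⟩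
    · rcases mem_insert.1 hB with rfl | hB
      · exact hCs
      · exact (hQ.1 B hB).trans sdiff_subset
    by_cases hxC : x ∈ C
    · refine ⟨C, ⟨mem_insert_self C Q, hxC⟩, fun B ⟨hB, hxB⟩ => ?_⟩
      rcases mem_insert.1 hB with rfl | hB
      · rfl
      · exact absurd hxC (mem_sdiff.1 (hQ.1 B hB hxB)).2
    · obtain ⟨B, ⟨hB, hxB⟩, huniq⟩ := hQ.2 x (mem_sdiff.2 ⟨hx, hxC⟩)
      refine ⟨B, ⟨mem_insert_of_mem hB, hxB⟩, fun B' ⟨hB', hxB'⟩ => ?_⟩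
      rcases mem_insert.1 hB' with rfl | hB'
      · exact absurd hxB' hxC
      · exact huniq B' ⟨hB', hxB'⟩

end IsSetPartition

noncomputable def pairings (s : Finset α) : Finset (Finset (Finset α)) :=
  {P ∈ s.powerset.powerset | IsSetPartition s P ∧ ∀ B ∈ P, B.card = 2}

variable {s C : Finset α} {P : Finset (Finset α)}

theorem mem_pairings : P ∈ pairings s ↔ IsSetPartition s P ∧ ∀ B ∈ P, B.card = 2 := by
  simp only [pairings, mem_filter, mem_powerset, and_iff_right_iff_imp]
  exact fun hP => hP.1.subset_powerset

theorem pairings_empty : pairings (∅ : Finset α) = {∅} := by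
  ext P
  rw [mem_pairings, mem_singleton]
  refine ⟨fun ⟨hP, h2⟩ => eq_empty_of_forall_notMem fun B hB => ?_, ?_⟩
  · have hB2 := h2 B hB
    rw [subset_empty.1 (hP.1 B hB), card_empty] at hB2
    omega
  · rintro rfl
    exact ⟨⟨by simp, by simp⟩, by simp⟩

variable [DecidableEq α]

theorem notMem_of_mem_pairings_sdiff (hC : C.Nonempty) {Q : Finset (Finset α)}
    (hQ : Q ∈ pairings (s \ C)) : C ∉ Q := by
  intro hCQ
  obtain ⟨x, hx⟩ := hC
  exact (mem_sdiff.1 ((mem_pairings.1 hQ).1.1 C hCQ hx)).2 hx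

theorem mem_image_insert_pairings_sdiff (hC : C ⊆ s) (hCne : C.Nonempty) :
    P ∈ (pairings (s \ C)).image (insert C) ↔
      IsSetPartition s P ∧ C ∈ P ∧ ∀ B ∈ P.erase C, B.card = 2 := by
  constructor
  · intro h
    obtain ⟨Q, hQ, rfl⟩ := mem_image.1 h
    have hCQ := notMem_of_mem_pairings_sdiff hCne hQ
    obtain ⟨hQpart, hQ2⟩ := mem_pairings.1 hQ
    refine ⟨(IsSetPartition.insert_iff hCQ).2 ⟨hC, hQpart⟩, mem_insert_self C Q, ?_⟩
    rwa [erase_insert hCQ]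
  · rintro ⟨hP, hCP, h2⟩
    refine mem_image.2 ⟨P.erase C, mem_pairings.2 ⟨?_, h2⟩, insert_erase hCP⟩
    rw [← insert_erase hCP] at hP
    exact ((IsSetPartition.insert_iff (notMem_erase C P)).1 hP).2

theorem card_image_insert_pairings_sdiff (hC : C.Nonempty) :
    ((pairings (s \ C)).image (insert C)).card = (pairings (s \ C)).card := by
  refine card_image_of_injOn fun Q hQ Q' hQ' h => ?_
  rw [← erase_insert (notMem_of_mem_pairings_sdiff hC hQ), h,
    erase_insert (notMem_of_mem_pairings_sdiff hC hQ')]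

theorem pairings_eq_biUnion {x : α} (hx : x ∈ s) :
    pairings s = (s.erase x).biUnion fun y => (pairings (s \ {x, y})).image (insert {x, y}) := by
  ext P
  rw [mem_biUnion]
  constructor
  · intro hP
    obtain ⟨hPpart, h2⟩ := mem_pairings.1 hP
    obtain ⟨B, ⟨hB, hxB⟩, -⟩ := hPpart.2 x hx
    obtain ⟨y, hy⟩ := card_eq_one.1 (by rw [card_erase_of_mem hxB, h2 B hB] : (B.erase x).card = 1)
    have hyB : y ∈ B.erase x := hy ▸ mem_singleton_self y
    have hBxy : B = {x, y} := by rw [← insert_erase hxB, hy]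
    refine ⟨y, mem_erase.2 ⟨ne_of_mem_erase hyB, hPpart.1 B hB (mem_of_mem_erase hyB)⟩, ?_⟩
    rw [mem_image_insert_pairings_sdiff (hBxy ▸ hPpart.1 B hB) (insert_nonempty x {y})]
    exact ⟨hPpart, hBxy ▸ hB, fun B' hB' => h2 B' (mem_of_mem_erase hB')⟩
  · rintro ⟨y, hy, hP⟩
    obtain ⟨hyx, hys⟩ := mem_erase.1 hy
    rw [mem_image_insert_pairings_sdiff (insert_subset hx (singleton_subset_iff.2 hys))
      (insert_nonempty x {y})] at hP
    obtain ⟨hPpart, hxyP, h2⟩ := hP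
    refine mem_pairings.2 ⟨hPpart, fun B hB => ?_⟩
    by_cases hB' : B = {x, y}
    · rw [hB', card_pair hyx.symm]
    · exact h2 B (mem_erase.2 ⟨hB', hB⟩)

theorem pairwiseDisjoint_image_insert_pair {x : α} (hx : x ∈ s) :
    ((s.erase x : Finset α) : Set α).PairwiseDisjoint
      fun y => (pairings (s \ {x, y})).image (insert {x, y}) := by
  intro y hy y' hy' hne
  refine disjoint_left.2 fun P hP hP' => hne ?_
  obtain ⟨hyx, hys⟩ := mem_erase.1 hy
  obtain ⟨hPpart, hxyP, -⟩ := (mem_image_insert_pairings_sdiff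
    (insert_subset hx (singleton_subset_iff.2 hys)) (insert_nonempty x {y})).1 hP
  obtain ⟨-, hxy'P, -⟩ := (mem_image_insert_pairings_sdiff
    (insert_subset hx (singleton_subset_iff.2 (mem_of_mem_erase hy')))
    (insert_nonempty x {y'})).1 hP'
  have h := hPpart.eq_of_mem_of_mem hxyP hxy'P (mem_insert_self x {y}) (mem_insert_self x {y'})
  have hy_mem : y ∈ ({x, y'} : Finset α) := h ▸ mem_insert_of_mem (mem_singleton_self y)
  simpa [hyx] using hy_mem

theorem card_pairings_of_card_eq (n : ℕ) {s : Finset α} (hs : s.card = 2 * n) :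
    (pairings s).card = (2 * n - 1)‼ := by
  induction n generalizing s with
  | zero =>
    rw [card_eq_zero.1 hs, pairings_empty]
    rfl
  | succ n ih =>
    obtain ⟨x, hx⟩ := card_pos.1 (by omega : 0 < s.card)
    have hterm : ∀ y ∈ s.erase x,
        ((pairings (s \ {x, y})).image (insert {x, y})).card = (2 * n - 1)‼ := by
      intro y hy
      obtain ⟨hyx, hys⟩ := mem_erase.1 hy
      rw [card_image_insert_pairings_sdiff (insert_nonempty x {y})]
      refine ih ?_
      rw [card_sdiff_of_subset (insert_subset hx (singleton_subset_iff.2 hys)), card_pair hyx.symm,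
        hs]
      omega
    rw [pairings_eq_biUnion hx, card_biUnion (pairwiseDisjoint_image_insert_pair hx),
      sum_congr rfl hterm, sum_const, card_erase_of_mem hx, hs, smul_eq_mul,
      show 2 * (n + 1) - 1 = 2 * n + 1 by omega, Nat.doubleFactorial_add_one]

theorem card_pairings (hs : Even s.card) : (pairings s).card = (s.card - 1)‼ := by
  obtain ⟨n, hn⟩ := hs
  rw [card_pairings_of_card_eq n (by omega), hn, two_mul]

noncomputable def tripletPairings (s : Finset α) : Finset (Finset (Finset α)) :=
  {P ∈ s.powerset.powerset |
    IsSetPartition s P ∧ ∃ C ∈ P, C.card = 3 ∧ ∀ B ∈ P.erase C, B.card = 2}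

theorem mem_tripletPairings : P ∈ tripletPairings s ↔
    IsSetPartition s P ∧ ∃ C ∈ P, C.card = 3 ∧ ∀ B ∈ P.erase C, B.card = 2 := by
  simp only [tripletPairings, mem_filter, mem_powerset, and_iff_right_iff_imp]
  exact fun hP => hP.1.subset_powerset

theorem tripletPairings_eq_biUnion (s : Finset α) :
    tripletPairings s =
      (s.powersetCard 3).biUnion fun C => (pairings (s \ C)).image (insert C) := by
  ext P
  rw [mem_tripletPairings, mem_biUnion]
  constructor
  · rintro ⟨hP, C, hCP, hC3, h2⟩
    have hCs := hP.1 C hCP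
    exact ⟨C, mem_powersetCard.2 ⟨hCs, hC3⟩,
      (mem_image_insert_pairings_sdiff hCs (card_pos.1 (by omega))).2 ⟨hP, hCP, h2⟩⟩
  · rintro ⟨C, hC, hP⟩
    obtain ⟨hCs, hC3⟩ := mem_powersetCard.1 hC
    obtain ⟨hPpart, hCP, h2⟩ := (mem_image_insert_pairings_sdiff hCs (card_pos.1 (by omega))).1 hP
    exact ⟨hPpart, C, hCP, hC3, h2⟩

theorem card_tripletPairings (hs : Odd s.card) :
    (tripletPairings s).card = s.card.choose 3 * (s.card - 4)‼ := by
  have hdisj : ((s.powersetCard 3 : Finset (Finset α)) : Set (Finset α)).PairwiseDisjoint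
      fun C => (pairings (s \ C)).image (insert C) := by
    intro C hC C' hC' hne
    obtain ⟨hCs, hC3⟩ := mem_powersetCard.1 hC
    obtain ⟨hC's, hC'3⟩ := mem_powersetCard.1 hC'
    refine disjoint_left.2 fun P hP hP' => ?_
    obtain ⟨-, hC'P, h2⟩ := (mem_image_insert_pairings_sdiff hCs (card_pos.1 (by omega))).1 hP
    obtain ⟨-, hCP', -⟩ := (mem_image_insert_pairings_sdiff hC's (card_pos.1 (by omega))).1 hP'
    have := h2 C' (mem_erase.2 ⟨hne.symm, hCP'⟩)
    omega
  have hterm : ∀ C ∈ s.powersetCard 3,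
      ((pairings (s \ C)).image (insert C)).card = (s.card - 4)‼ := by
    intro C hC
    obtain ⟨hCs, hC3⟩ := mem_powersetCard.1 hC
    have hcard : (s \ C).card = s.card - 3 := by rw [card_sdiff_of_subset hCs, hC3]
    have heven : Even (s \ C).card := by
      have := card_le_card hCs
      obtain ⟨n, hn⟩ := hs
      exact ⟨n - 1, by omega⟩
    rw [card_image_insert_pairings_sdiff (card_pos.1 (by omega)), card_pairings heven, hcard,
      Nat.sub_sub]
  rw [tripletPairings_eq_biUnion, card_biUnion hdisj, sum_congr rfl hterm, sum_const,
    card_powersetCard, smul_eq_mul]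

end SetPartition

section BlockSizes

variable {α : Type*}

theorem card_eq_two_of_sum_card_le {Q : Finset (Finset α)} (h2 : ∀ B ∈ Q, 2 ≤ B.card)
    (hsum : ∑ B ∈ Q, B.card ≤ 2 * Q.card) : ∀ B ∈ Q, B.card = 2 := by
  have heq : ∑ B ∈ Q, 2 = ∑ B ∈ Q, B.card :=
    le_antisymm (sum_le_sum h2) (by rwa [sum_const, smul_eq_mul, mul_comm])
  exact fun B hB => ((sum_eq_sum_iff_of_le h2).1 heq B hB).symm

theorem exists_card_eq_three_of_sum_card_eq [DecidableEq α] {Q : Finset (Finset α)}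
    (h2 : ∀ B ∈ Q, 2 ≤ B.card) (hsum : ∑ B ∈ Q, B.card = 2 * Q.card + 1) :
    ∃ C ∈ Q, C.card = 3 ∧ ∀ B ∈ Q.erase C, B.card = 2 := by
  obtain ⟨C, hCQ, hC⟩ : ∃ C ∈ Q, C.card ≠ 2 := by
    by_contra! h
    rw [sum_const_nat h] at hsum
    omega
  have h2' : ∀ B ∈ Q.erase C, 2 ≤ B.card := fun B hB => h2 B (mem_of_mem_erase hB)
  have hrest : (Q.erase C).card • 2 ≤ ∑ B ∈ Q.erase C, B.card := card_nsmul_le_sum _ _ _ h2'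
  have hsplit := add_sum_erase Q card hCQ
  have hcard := card_erase_add_one hCQ
  have hC2 := h2 C hCQ
  rw [smul_eq_mul] at hrest
  exact ⟨C, hCQ, by omega, card_eq_two_of_sum_card_le h2' (by omega)⟩

variable [DecidableEq α] {s : Finset α} {P : Finset (Finset α)}

theorem IsSetPartition.two_mul_card_le (hP : IsSetPartition s P) (h2 : ∀ B ∈ P, 2 ≤ B.card) :
    2 * P.card ≤ s.card := by
  rw [← hP.sum_card, mul_comm, ← smul_eq_mul]
  exact card_nsmul_le_sum P card 2 h2

theorem mem_pairings_iff_two_mul_card_eq :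
    P ∈ pairings s ↔ (IsSetPartition s P ∧ ∀ B ∈ P, 2 ≤ B.card) ∧ 2 * P.card = s.card := by
  rw [mem_pairings]
  constructor
  · rintro ⟨hP, h2⟩
    exact ⟨⟨hP, fun B hB => (h2 B hB).ge⟩, by rw [← hP.sum_card, sum_const_nat h2, mul_comm]⟩
  · rintro ⟨⟨hP, h2⟩, hcard⟩
    exact ⟨hP, card_eq_two_of_sum_card_le h2 (by rw [hP.sum_card, hcard])⟩

theorem mem_tripletPairings_iff_two_mul_card_add_one_eq :
    P ∈ tripletPairings s ↔
      (IsSetPartition s P ∧ ∀ B ∈ P, 2 ≤ B.card) ∧ 2 * P.card + 1 = s.card := by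
  rw [mem_tripletPairings]
  constructor
  · rintro ⟨hP, C, hCP, hC3, h2⟩
    have := card_erase_add_one hCP
    refine ⟨⟨hP, fun B hB => ?_⟩, by rw [hP.card_eq_card_add_two_mul hCP h2, hC3]; omega⟩
    by_cases hBC : B = C
    · rw [hBC, hC3]; omega
    · exact (h2 B (mem_erase.2 ⟨hBC, hB⟩)).ge
  · rintro ⟨⟨hP, h2⟩, hcard⟩
    exact ⟨hP, exists_card_eq_three_of_sum_card_eq h2 (by rw [hP.sum_card, hcard])⟩

theorem prod_of_mem_pairings {M : Type*} [CommMonoid M] (f : ℕ → M) (hP : P ∈ pairings s) :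
    ∏ B ∈ P, f B.card = f 2 ^ (s.card / 2) := by
  obtain ⟨hPpart, h2⟩ := mem_pairings.1 hP
  rw [prod_congr rfl fun B hB => by rw [h2 B hB], prod_const, ← hPpart.sum_card,
    sum_const_nat h2]
  congr 1
  omega

theorem prod_of_mem_tripletPairings {M : Type*} [CommMonoid M] (f : ℕ → M)
    (hP : P ∈ tripletPairings s) : ∏ B ∈ P, f B.card = f 3 * f 2 ^ ((s.card - 3) / 2) := by
  obtain ⟨hPpart, C, hCP, hC3, h2⟩ := mem_tripletPairings.1 hP
  rw [← mul_prod_erase P _ hCP, prod_congr rfl fun B hB => by rw [h2 B hB], prod_const,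
    hPpart.card_eq_card_add_two_mul hCP h2, hC3]
  congr 2
  omega

end BlockSizes

noncomputable def partitionsGe2 (m : ℕ) : Finset (Finset (Finset (Fin m))) :=
  {P | IsPartitionGe2 P}

section PartitionsGe2

variable {m : ℕ}

theorem mem_partitionsGe2 {P : Finset (Finset (Fin m))} :
    P ∈ partitionsGe2 m ↔ IsSetPartition univ P ∧ ∀ B ∈ P, 2 ≤ B.card := by
  simp [partitionsGe2, IsPartitionGe2, IsSetPartition, and_comm]

theorem partSum_eq_sum (a : ℕ → ℝ) (j dk m : ℕ) (ρ : ℝ) :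
    partSum a j dk m ρ =
      ∑ P ∈ partitionsGe2 m, (∏ B ∈ P, a B.card) * ρ ^ (j * m + dk * P.card) := by
  refine sum_congr rfl fun P hP => ?_
  have hsum := (mem_partitionsGe2.1 hP).1.sum_card
  rw [card_univ, Fintype.card_fin] at hsum
  rw [prod_mul_distrib, prod_pow_eq_pow_sum, sum_add_distrib, ← mul_sum, hsum, sum_const,
    smul_eq_mul, mul_comm P.card]

theorem tendsto_partSum_div_pow (a : ℕ → ℝ) (j : ℕ) {dk : ℕ} (hdk : 0 < dk) (m : ℕ) :
    Tendsto (fun ρ : ℝ => partSum a j dk m ρ / ρ ^ (j * m + dk * (m / 2))) atTop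
      (𝓝 (∑ P ∈ partitionsGe2 m with P.card = m / 2, ∏ B ∈ P, a B.card)) := by
  have hle : ∀ P ∈ partitionsGe2 m, j * m + dk * P.card ≤ j * m + dk * (m / 2) := by
    intro P hP
    obtain ⟨hPpart, h2⟩ := mem_partitionsGe2.1 hP
    have := hPpart.two_mul_card_le h2
    rw [card_univ, Fintype.card_fin] at this
    gcongr
    omega
  simp_rw [partSum_eq_sum]
  convert tendsto_sum_mul_pow_div_pow _ (fun P => ∏ B ∈ P, a B.card) _ hle using 3
  simp [hdk.ne']

theorem sum_prod_filter_card_eq_half_of_even (a : ℕ → ℝ) (hm : Even m) :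
    ∑ P ∈ partitionsGe2 m with P.card = m / 2, ∏ B ∈ P, a B.card =
      ((m - 1)‼ : ℝ) * a 2 ^ (m / 2) := by
  have hfilter : {P ∈ partitionsGe2 m | P.card = m / 2} = pairings univ := by
    ext P
    rw [mem_filter, mem_partitionsGe2, mem_pairings_iff_two_mul_card_eq, card_univ,
      Fintype.card_fin]
    obtain ⟨n, rfl⟩ := hm
    exact and_congr_right' (by omega)
  rw [hfilter, sum_congr rfl fun P hP => prod_of_mem_pairings a hP, sum_const,
    card_pairings (by simpa using hm), nsmul_eq_mul, card_univ, Fintype.card_fin]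

theorem sum_prod_filter_card_eq_half_of_odd (a : ℕ → ℝ) (hm : Odd m) :
    ∑ P ∈ partitionsGe2 m with P.card = m / 2, ∏ B ∈ P, a B.card =
      (m.choose 3 : ℝ) * ((m - 4)‼ : ℝ) * a 3 * a 2 ^ ((m - 3) / 2) := by
  have hfilter : {P ∈ partitionsGe2 m | P.card = m / 2} = tripletPairings univ := by
    ext P
    rw [mem_filter, mem_partitionsGe2, mem_tripletPairings_iff_two_mul_card_add_one_eq,
      card_univ, Fintype.card_fin]
    obtain ⟨n, rfl⟩ := hm
    exact and_congr_right' (by omega)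
  rw [hfilter, sum_congr rfl fun P hP => prod_of_mem_tripletPairings a hP, sum_const,
    card_tripletPairings (by simpa using hm), nsmul_eq_mul, card_univ, Fintype.card_fin]
  push_cast
  ring

end PartitionsGe2

theorem partSum_asymptotics_general (d k j m : ℕ) (hdk : k < d) (a : ℕ → ℝ) :
    (Even m →
      Tendsto (fun ρ : ℝ => partSum a j (d - k) m ρ / ρ ^ (j * m + m * (d - k) / 2))
        atTop (nhds (((m - 1)‼ : ℝ) * a 2 ^ (m / 2)))) ∧
    (Odd m → d - k = 1 →
      Tendsto (fun ρ : ℝ => partSum a j (d - k) m ρ / ρ ^ (j * m + m * (d - k) / 2))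
        atTop (nhds ((m.choose 3 : ℝ) * ((m - 4)‼ : ℝ) * a 3 * a 2 ^ ((m - 3) / 2)))) := by
  refine ⟨fun hm => ?_, fun hm hdk1 => ?_⟩
  · rw [mul_comm m, Nat.mul_div_assoc _ hm.two_dvd, ← sum_prod_filter_card_eq_half_of_even a hm]
    exact tendsto_partSum_div_pow a j (Nat.sub_pos_of_lt hdk) m
  · rw [hdk1, mul_one, ← sum_prod_filter_card_eq_half_of_odd a hm]
    simpa only [one_mul] using tendsto_partSum_div_pow a j one_pos m

theorem partSum_asymptotics (d k j m : ℕ) (hdk : k < d) (hm : 2 ≤ m)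
    (a : ℕ → ℝ) (ha : ∀ i, 2 ≤ i → 0 < a i) :
    (Even m →
      Tendsto (fun ρ : ℝ => partSum a j (d - k) m ρ / ρ ^ (j * m + m * (d - k) / 2))
        atTop (nhds (((m - 1)‼ : ℝ) * a 2 ^ (m / 2)))) ∧
    (Odd m → d - k = 1 →
      Tendsto (fun ρ : ℝ => partSum a j (d - k) m ρ / ρ ^ (j * m + m * (d - k) / 2))
        atTop (nhds ((m.choose 3 : ℝ) * ((m - 4)‼ : ℝ) * a 3 * a 2 ^ ((m - 3) / 2)))) :=
  partSum_asymptotics_general d k j m hdk a
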